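/- arXiv:2502.16202 — 4 statements merged into one kernel-verified Lean document; each statement's English description precedes it below -/
import Mathlib

section
/- Let K be a perfect field, g ∈ K[x] an irreducible separable polynomial, and β a root of g in an algebraic closure of K. If f ∈ K[x] is separable and f - β factors into monic irreducibles as ∏ f_i over K(β), then g ∘ f factors into irreducibles over K as ∏ f_i' where each f_i' is irreducible of degree deg(f_i) · deg(g), and f_i' is the minimal polynomial over K of a root of f_i. -/
/-!
Over an algebraic closure `Ω`, the separable polynomial `g = minpoly K β` is `∏ ψ, (X - ψ β)`,
the product running over the `K`-embeddings `ψ : K⟮β⟯ → Ω`, so `g ∘ f = ∏ ψ, (f - ψ β)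
= ∏ ψ, ∏ i, ψ (fᵢ)`. Since `β = f(αᵢ)` lies in `K⟮αᵢ⟯`, the tower law gives
`deg (minpoly K αᵢ) = [K⟮β⟯ : K] · deg fᵢ`, and the `ψ (fᵢ)` are monic divisors of `minpoly K αᵢ`
which are pairwise coprime, because `ψ (fᵢ)` divides `f - ψ β`. Hence
`minpoly K αᵢ = ∏ ψ, ψ (fᵢ)`, and regrouping the double product proves the theorem.
-/

open Polynomial IntermediateField

theorem Polynomial.eq_prod_of_pairwise_isCoprime_of_dvd {R ι : Type*} [CommRing R] [Fintype ι]
    {p : R[X]} {q : ι → R[X]} (hp : p.Monic) (hq : ∀ i, (q i).Monic)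
    (hcop : Pairwise (Function.onFun IsCoprime q)) (hdvd : ∀ i, q i ∣ p)
    (hdeg : p.natDegree ≤ ∑ i, (q i).natDegree) : p = ∏ i, q i :=
  eq_of_monic_of_dvd_of_natDegree_le (monic_prod_of_monic _ _ fun i _ ↦ hq i) hp
    (Fintype.prod_dvd_of_coprime hcop hdvd)
    (by rwa [natDegree_prod_of_monic _ _ fun i _ ↦ hq i])

theorem Polynomial.isCoprime_sub_C_of_ne {K : Type*} [Field K] (p : K[X]) {a b : K} (h : a ≠ b) :
    IsCoprime (p - C a) (p - C b) := by
  simpa using (isCoprime_X_sub_C_of_isUnit_sub (sub_ne_zero_of_ne h).isUnit).map (compRingHom p)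

namespace IntermediateField

variable {K Ω : Type*} [Field K] [Field Ω] [Algebra K Ω]

theorem natDegree_minpoly_eq_finrank_mul {α : Ω} (hα : IsIntegral K α)
    {L : IntermediateField K Ω} (hL : L ≤ K⟮α⟯) :
    (minpoly K α).natDegree = Module.finrank K L * (minpoly L α).natDegree := by
  have hLα : L⟮α⟯.restrictScalars K = K⟮α⟯ := by
    rw [restrictScalars_adjoin]
    exact le_antisymm (adjoin_le_iff.mpr (Set.union_subset hL (subset_adjoin K _)))
      (adjoin.mono _ _ _ Set.subset_union_right)
  rw [← adjoin.finrank hα, ← adjoin.finrank hα.tower_top, Module.finrank_mul_finrank, ← hLα]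
  rfl

theorem AdjoinSimple.algHom_injective_gen (β : Ω) {M : Type*} [Field M] [Algebra K M] :
    Function.Injective fun ψ : K⟮β⟯ →ₐ[K] M ↦ ψ (AdjoinSimple.gen K β) :=
  fun _ _ h ↦ adjoin_algHom_ext K fun x hx ↦ by
    obtain rfl := hx; exact h

theorem adjoin_simple_le_of_aeval_eq {α β : Ω} {f : K[X]} (hf : aeval α f = β) :
    K⟮β⟯ ≤ K⟮α⟯ := by
  rw [adjoin_simple_le_iff, ← hf]
  exact algebra_adjoin_le_adjoin K _ (aeval_mem_adjoin_singleton K α)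

variable [IsAlgClosed Ω]

theorem card_algHom_adjoin_eq_natDegree {β : Ω} (hβ : IsSeparable K β)
    [Fintype (K⟮β⟯ →ₐ[K] Ω)] :
    Fintype.card (K⟮β⟯ →ₐ[K] Ω) = (minpoly K β).natDegree := by
  rw [← Nat.card_eq_fintype_card]
  exact card_algHom_adjoin_integral K hβ.isIntegral hβ (IsAlgClosed.splits _)

theorem map_minpoly_eq_prod_X_sub_C {β : Ω} (hβ : IsSeparable K β) [Fintype (K⟮β⟯ →ₐ[K] Ω)] :
    (minpoly K β).map (algebraMap K Ω) =
      ∏ ψ : K⟮β⟯ →ₐ[K] Ω, (X - C (ψ (AdjoinSimple.gen K β))) := by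
  refine Polynomial.eq_prod_of_pairwise_isCoprime_of_dvd ((minpoly.monic hβ.isIntegral).map _)
    (fun _ ↦ monic_X_sub_C _) (pairwise_coprime_X_sub_C (AdjoinSimple.algHom_injective_gen β))
    (fun ψ ↦ ?_) ?_
  · rw [dvd_iff_isRoot, IsRoot, eval_map_algebraMap, aeval_algHom_apply, aeval_gen_minpoly,
      map_zero]
  · simp [card_algHom_adjoin_eq_natDegree hβ]

theorem map_minpoly_eq_prod_map_minpoly {α β : Ω} (hα : IsIntegral K α) (hβ : IsSeparable K β)
    [Fintype (K⟮β⟯ →ₐ[K] Ω)] {f : K[X]} (hf : aeval α f = β) :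
    (minpoly K α).map (algebraMap K Ω) =
      ∏ ψ : K⟮β⟯ →ₐ[K] Ω, (minpoly K⟮β⟯ α).map (ψ : K⟮β⟯ →+* Ω) := by
  have hαL : IsIntegral K⟮β⟯ α := hα.tower_top
  have hdvd_f : minpoly K⟮β⟯ α ∣ f.map (algebraMap K K⟮β⟯) - C (AdjoinSimple.gen K β) :=
    minpoly.dvd _ _ (by simp [hf])
  refine Polynomial.eq_prod_of_pairwise_isCoprime_of_dvd ((minpoly.monic hα).map _)
    (fun _ ↦ (minpoly.monic hαL).map _) (fun ψ ψ' hne ↦ ?_) (fun ψ ↦ ?_) ?_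
  · have hdvd (φ : K⟮β⟯ →ₐ[K] Ω) : (minpoly K⟮β⟯ α).map (φ : K⟮β⟯ →+* Ω) ∣
        f.map (algebraMap K Ω) - C (φ (AdjoinSimple.gen K β)) := by
      simpa [Polynomial.map_map] using map_dvd (φ : K⟮β⟯ →+* Ω) hdvd_f
    exact (isCoprime_sub_C_of_ne _ ((AdjoinSimple.algHom_injective_gen β).ne hne)).mono
      (hdvd ψ) (hdvd ψ')
  · simpa [Polynomial.map_map] using
      map_dvd (ψ : K⟮β⟯ →+* Ω) (minpoly.dvd_map_of_isScalarTower K K⟮β⟯ α)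
  · rw [natDegree_map, natDegree_minpoly_eq_finrank_mul hα (adjoin_simple_le_of_aeval_eq hf),
      adjoin.finrank hβ.isIntegral]
    simp [card_algHom_adjoin_eq_natDegree hβ]

end IntermediateField

theorem stmt_0_general {K : Type*} [Field K]
    (g f : Polynomial K) (hg : Irreducible g) (hgs : g.Separable) (hgm : g.Monic)
    (β : AlgebraicClosure K) (hβ : Polynomial.aeval β g = 0)
    {ι : Type*} [Fintype ι]
    (fi : ι → Polynomial K⟮β⟯)
    (hmono : ∀ i, (fi i).Monic) (hirr : ∀ i, Irreducible (fi i))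
    (hprod : ∏ i, fi i =
      Polynomial.map (algebraMap K K⟮β⟯) f - Polynomial.C (AdjoinSimple.gen K β))
    (α : ι → AlgebraicClosure K) (hα : ∀ i, Polynomial.aeval (α i) (fi i) = 0) :
    g.comp f = ∏ i, minpoly K (α i) ∧
      ∀ i, Irreducible (minpoly K (α i)) ∧
        (minpoly K (α i)).natDegree = (fi i).natDegree * g.natDegree := by
  have hg_min : g = minpoly K β := minpoly.eq_of_irreducible_of_monic hg hβ hgm
  have hβ_sep : IsSeparable K β := by rwa [IsSeparable, ← hg_min]
  let _ : Fintype (K⟮β⟯ →ₐ[K] AlgebraicClosure K) :=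
    fintypeOfAlgHomAdjoinIntegral K hβ_sep.isIntegral
  have hα_int (i : ι) : IsIntegral K (α i) := Algebra.IsIntegral.isIntegral _
  have hfi (i : ι) : fi i = minpoly K⟮β⟯ (α i) :=
    minpoly.eq_of_irreducible_of_monic (hirr i) (hα i) (hmono i)
  have hfα (i : ι) : aeval (α i) f = β := by
    have h := congrArg (aeval (α i)) hprod
    rw [map_prod, Finset.prod_eq_zero (Finset.mem_univ i) (hα i)] at h
    rw [map_sub, aeval_C, aeval_map_algebraMap, AdjoinSimple.algebraMap_gen] at h
    exact sub_eq_zero.mp h.symm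
  refine ⟨map_injective _ (algebraMap K (AlgebraicClosure K)).injective ?_,
    fun i ↦ ⟨minpoly.irreducible (hα_int i), ?_⟩⟩
  · calc (g.comp f).map (algebraMap K (AlgebraicClosure K))
        = ∏ ψ : K⟮β⟯ →ₐ[K] AlgebraicClosure K,
            (f.map (algebraMap K (AlgebraicClosure K)) - C (ψ (AdjoinSimple.gen K β))) := by
          rw [map_comp, hg_min, map_minpoly_eq_prod_X_sub_C hβ_sep, prod_comp]
          simp
      _ = ∏ ψ : K⟮β⟯ →ₐ[K] AlgebraicClosure K, ∏ i, (fi i).map (ψ : K⟮β⟯ →+* _) := by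
          refine Finset.prod_congr rfl fun ψ _ ↦ ?_
          rw [← Polynomial.map_prod, hprod]
          simp [Polynomial.map_map]
      _ = (∏ i, minpoly K (α i)).map (algebraMap K (AlgebraicClosure K)) := by
          rw [Finset.prod_comm, Polynomial.map_prod]
          simp only [hfi, map_minpoly_eq_prod_map_minpoly (hα_int _) hβ_sep (hfα _)]
  · rw [natDegree_minpoly_eq_finrank_mul (hα_int i) (adjoin_simple_le_of_aeval_eq (hfα i)),
      adjoin.finrank hβ_sep.isIntegral, ← hg_min, hfi, mul_comm]

/-- factorization of `g ∘ f` over `K` from the factorization of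
`f - β` over `K(β)`, for `g` irreducible separable with root `β`. -/
theorem stmt_0 {K : Type*} [Field K] [PerfectField K]
    (g f : Polynomial K) (hg : Irreducible g) (hgs : g.Separable) (hgm : g.Monic)
    (hfm : f.Monic) (hfs : f.Separable)
    (β : AlgebraicClosure K) (hβ : Polynomial.aeval β g = 0)
    {ι : Type*} [Fintype ι]
    (fi : ι → Polynomial K⟮β⟯)
    (hmono : ∀ i, (fi i).Monic) (hirr : ∀ i, Irreducible (fi i))
    (hprod : ∏ i, fi i =
      Polynomial.map (algebraMap K K⟮β⟯) f - Polynomial.C (AdjoinSimple.gen K β))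
    (α : ι → AlgebraicClosure K) (hα : ∀ i, Polynomial.aeval (α i) (fi i) = 0) :
    g.comp f = ∏ i, minpoly K (α i) ∧
      ∀ i, Irreducible (minpoly K (α i)) ∧
        (minpoly K (α i)).natDegree = (fi i).natDegree * g.natDegree :=
  stmt_0_general g f hg hgs hgm β hβ fi hmono hirr hprod α hα
end

section
/- Let K be a field, g ∈ K[x] irreducible, β a root of g, and f ∈ K[x]. If α is a root of f - β, then the minimal polynomial of α over K divides g ∘ f and has degree equal to [K(β)(α) : K(β)] · deg(g). -/
open Polynomial IntermediateField

/-- if `g` is irreducible with root `β` and `f(α) = β`, then the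
minimal polynomial of `α` over `K` divides `g ∘ f` and has degree
`[K(β)(α) : K(β)] · deg g`. -/
theorem stmt_1 {K : Type*} [Field K] (g f : Polynomial K) (hg : Irreducible g)
    (β α : AlgebraicClosure K) (hβ : Polynomial.aeval β g = 0)
    (hα : Polynomial.aeval α f = β) :
    minpoly K α ∣ g.comp f ∧
      (minpoly K α).natDegree =
        Module.finrank K⟮β⟯ ↥(IntermediateField.adjoin K⟮β⟯ ({α} : Set (AlgebraicClosure K)))
          * g.natDegree := by
  have hαint : IsIntegral K α := Algebra.IsIntegral.isIntegral α
  have hβint : IsIntegral K β := Algebra.IsIntegral.isIntegral β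
  constructor
  · apply minpoly.dvd
    rw [aeval_comp, hα, hβ]
  · have h1 : (minpoly K α).natDegree = Module.finrank K K⟮α⟯ :=
      (IntermediateField.adjoin.finrank hαint).symm
    have hg0 : g.leadingCoeff ≠ 0 := hg.ne_zero ∘ leadingCoeff_eq_zero.mp
    have hg' : (minpoly K β).natDegree = g.natDegree := by
      rw [← minpoly.eq_of_irreducible hg hβ, natDegree_mul_C (inv_ne_zero hg0)]
    have h2 : Module.finrank K K⟮β⟯ = g.natDegree := by
      rw [IntermediateField.adjoin.finrank hβint, hg']
    set E := IntermediateField.adjoin K⟮β⟯ ({α} : Set (AlgebraicClosure K)) with hE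
    have htower : Module.finrank K K⟮β⟯ * Module.finrank K⟮β⟯ E = Module.finrank K E :=
      Module.finrank_mul_finrank K K⟮β⟯ E
    have hres : E.restrictScalars K = K⟮α⟯ := by
      rw [hE, IntermediateField.adjoin_adjoin_left]
      apply le_antisymm
      · rw [IntermediateField.adjoin_le_iff]
        intro x hx
        rcases hx with hx | hx <;> rw [Set.mem_singleton_iff] at hx <;> subst hx
        · rw [← hα]
          exact IntermediateField.algebra_adjoin_le_adjoin K _
            (Polynomial.aeval_mem_adjoin_singleton K α)
        · exact IntermediateField.mem_adjoin_simple_self K x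
      · exact IntermediateField.adjoin.mono _ _ _ (by simp)
    have hfr : Module.finrank K E = Module.finrank K K⟮α⟯ := by
      rw [← hres]; rfl
    rw [h1, ← hfr, ← htower, h2, mul_comm]
end

section
/- Let K be a finite field of characteristic p ≠ 2, 3, f ∈ K[x] a cubic polynomial with critical points γ₁, γ₂, and g ∈ K[x] such that g ∘ f^{n-1} is irreducible for some n ≥ 1. If (-3)^{deg(g)} · g(f^n(γ₁)) · g(f^n(γ₂)) is not a square in K, then g ∘ f^n factors into exactly two irreducible polynomials, one of degree deg(g ∘ f^{n-1}) and one of degree 2·deg(g ∘ f^{n-1}). -/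
open Polynomial

/-- `iterComp f n` is the `n`-fold composition `f ∘ f ∘ ⋯ ∘ f` (with `f⁰ = X`). -/
noncomputable def iterComp {K : Type*} [Field K] (f : Polynomial K) : ℕ → Polynomial K
  | 0 => Polynomial.X
  | n + 1 => (iterComp f n).comp f

/-!
Let `α` be a root of `G = g ∘ f^{n-1}` in an algebraic closure of `K`, `m = deg G`, and let
`Φ = Frob_q^m`, which fixes `K(α)`. Then `Φ` permutes the roots `u, v, w` of `f - α`, and
`t = a (u - v)(u - w)(v - w) / 3` satisfies `t² = -3 (f(γ₁) - α)(f(γ₂) - α)`. The product of the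
Frobenius conjugates of `t²` is `(-3)^m G(f γ₁) G(f γ₂) / lc(G)²`, a non-square of `K`, so Euler's
criterion gives `Φ t = -t`: `Φ` acts on `{u, v, w}` as a transposition. The root it fixes has
degree `m` over `K`, the two it swaps have degree `2m`, and their minimal polynomials exhaust
`deg (G ∘ f) = 3m`.
-/

theorem IsSquare.of_mul_sq {α : Type*} [CommGroupWithZero α] {x y : α} (hy : y ≠ 0)
    (h : IsSquare (x * y ^ 2)) : IsSquare x := by
  simpa [hy] using h.div (IsSquare.sq y)

theorem Nat.eq_two_mul_of_dvd_of_dvd_two_mul {m d : ℕ} (hmd : m ∣ d) (hd : d ∣ 2 * m)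
    (hdm : ¬d ∣ m) : d = 2 * m := by
  obtain ⟨k, rfl⟩ := hmd
  have hm : 0 < m := Nat.pos_of_ne_zero (by rintro rfl; simp at hdm)
  have hk : k ∣ 2 := Nat.dvd_of_mul_dvd_mul_left hm (by simpa [mul_comm] using hd)
  have := Nat.le_of_dvd two_pos hk
  interval_cases k
  all_goals simp_all [mul_comm]

namespace FiniteField

variable {K L : Type*} [Field K] [Fintype K] [Field L] [Algebra K L]

theorem frobeniusAlgHom_pow_apply (j : ℕ) (y : L) :
    (frobeniusAlgHom K L ^ j) y = y ^ Fintype.card K ^ j := by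
  rw [AlgHom.coe_pow, coe_frobeniusAlgHom, pow_iterate]

theorem aeval_pow_card_pow (p : K[X]) (y : L) (j : ℕ) :
    aeval (y ^ Fintype.card K ^ j) p = aeval y p ^ Fintype.card K ^ j := by
  rw [← frobeniusAlgHom_pow_apply, aeval_algHom_apply, frobeniusAlgHom_pow_apply]

theorem pow_card_pow_eq_self_iff {x : L} (hx : IsIntegral K x) (j : ℕ) :
    x ^ Fintype.card K ^ j = x ↔ (minpoly K x).natDegree ∣ j := by
  rw [(minpoly.irreducible hx).natDegree_dvd_iff_dvd_X_pow_card_pow_sub_X, minpoly.dvd_iff,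
    Nat.card_eq_fintype_card]
  simp [sub_eq_zero]

theorem pow_card_pow_injOn {x : L} (hx : IsIntegral K x) :
    Set.InjOn (fun i ↦ x ^ Fintype.card K ^ i) (Set.Iio (minpoly K x).natDegree) := by
  suffices h : ∀ i j, i ≤ j → j < (minpoly K x).natDegree →
      x ^ Fintype.card K ^ i = x ^ Fintype.card K ^ j → i = j by
    intro i hi j hj hij
    rcases le_total i j with hle | hle
    · exact h i j hle hj hij
    · exact (h j i hle hi hij.symm).symm
  intro i j hij hj h
  have hfix : x ^ Fintype.card K ^ (j - i) = x := by
    apply (frobeniusAlgHom K L ^ i).toRingHom.injective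
    simp only [AlgHom.toRingHom_eq_coe, RingHom.coe_coe, frobeniusAlgHom_pow_apply]
    rw [← pow_mul, ← pow_add, Nat.sub_add_cancel hij, h]
  have := Nat.eq_zero_of_dvd_of_lt ((pow_card_pow_eq_self_iff hx _).mp hfix) (by omega)
  omega

theorem minpoly_map_eq_prod {x : L} (hx : IsIntegral K x) :
    (minpoly K x).map (algebraMap K L) =
      ∏ i ∈ Finset.range (minpoly K x).natDegree, (X - C (x ^ Fintype.card K ^ i)) := by
  set d := (minpoly K x).natDegree
  have hmonic : (∏ i ∈ Finset.range d, (X - C (x ^ Fintype.card K ^ i))).Monic :=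
    monic_prod_of_monic _ _ fun i _ ↦ monic_X_sub_C _
  refine eq_of_monic_of_dvd_of_natDegree_le hmonic ((minpoly.monic hx).map _) ?_ ?_
  · have hprod : ∏ i ∈ Finset.range d, (X - C (x ^ Fintype.card K ^ i)) =
        (((Finset.range d).val.map fun i ↦ x ^ Fintype.card K ^ i).map fun y ↦ X - C y).prod := by
      rw [Multiset.map_map]; rfl
    rw [hprod, Multiset.prod_X_sub_C_dvd_iff_le_roots ((minpoly.monic hx).map _).ne_zero,
      Multiset.le_iff_subset ((Finset.range d).nodup.map_on fun i hi j hj ↦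
        pow_card_pow_injOn hx (by simpa using hi) (by simpa using hj))]
    intro y hy
    obtain ⟨i, -, rfl⟩ := Multiset.mem_map.mp hy
    rw [mem_roots_map_of_injective (algebraMap K L).injective (minpoly.ne_zero hx),
      ← aeval_def, aeval_pow_card_pow, minpoly.aeval, zero_pow (by positivity)]
  · rw [natDegree_map, natDegree_prod_of_monic _ _ fun i _ ↦ monic_X_sub_C _]
    simp only [natDegree_X_sub_C, Finset.sum_const, Finset.card_range, smul_eq_mul, mul_one]
    exact le_rfl

theorem natDegree_minpoly_dvd_of_aeval_eq {x y : L} (hx : IsIntegral K x) (hy : IsIntegral K y)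
    {f : K[X]} (h : aeval y f = x) : (minpoly K x).natDegree ∣ (minpoly K y).natDegree := by
  rw [← pow_card_pow_eq_self_iff hx, ← h, ← aeval_pow_card_pow,
    (pow_card_pow_eq_self_iff hy _).mpr dvd_rfl]

theorem pow_card_pow_ne_self_of_sq_pow_eq (h2 : (2 : K) ≠ 0) {z : K} (hz : ¬IsSquare z) {t : L}
    {m : ℕ} (ht : (t ^ 2) ^ ∑ i ∈ Finset.range m, Fintype.card K ^ i = algebraMap K L z) :
    t ^ Fintype.card K ^ m ≠ t := by
  set q := Fintype.card K
  have hK : ringChar K ≠ 2 := fun h ↦ h2 (by simpa [h] using ringChar.Nat.cast_ringChar (R := K))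
  have hz0 : z ≠ 0 := by rintro rfl; exact hz .zero
  have hEuler : z ^ (q / 2) = -1 :=
    (pow_dichotomy hK hz0).resolve_left fun h ↦ hz ((isSquare_iff hK hz0).mpr h)
  have hq : 2 * (q / 2) + 1 = q := by have := odd_card_of_char_ne_two hK; omega
  have hqm : q ^ m = 2 * (∑ i ∈ Finset.range m, q ^ i) * (q / 2) + 1 := by
    have := geom_sum_mul_add (2 * (q / 2)) m
    rw [hq] at this
    rw [← this]
    ring
  have hneg : t ^ q ^ m = -t := by
    rw [hqm, pow_succ, pow_mul, pow_mul, ht, ← map_pow, hEuler, map_neg, map_one, neg_one_mul]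
  have ht0 : t ≠ 0 := by
    rintro rfl
    rcases eq_or_ne (∑ i ∈ Finset.range m, q ^ i) 0 with hS | hS
    · exact hz ⟨1, by simpa [hS] using ht.symm⟩
    · exact hz0 (by simpa [hS] using ht.symm)
  have h2L : (2 : L) ≠ 0 := by
    rw [← map_ofNat (algebraMap K L) 2]
    exact (_root_.map_ne_zero _).mpr h2
  rw [hneg]
  intro h
  exact ht0 ((mul_eq_zero.mp (by linear_combination -h : (2 : L) * t = 0)).resolve_left h2L)

theorem pow_card_pow_natDegree_minpoly_ne_self (h2 : (2 : K) ≠ 0) {α : L} (hα : IsIntegral K α)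
    {c₁ c₂ : K} (hns : ¬IsSquare ((-3) ^ (minpoly K α).natDegree * (minpoly K α).eval c₁ *
      (minpoly K α).eval c₂))
    {t : L} (ht : t ^ 2 = -3 * (algebraMap K L c₁ - α) * (algebraMap K L c₂ - α)) :
    t ^ Fintype.card K ^ (minpoly K α).natDegree ≠ t := by
  refine pow_card_pow_ne_self_of_sq_pow_eq h2 hns ?_
  have heval (c : K) : ∏ i ∈ Finset.range (minpoly K α).natDegree,
      (algebraMap K L c - α ^ Fintype.card K ^ i) = algebraMap K L ((minpoly K α).eval c) := by
    rw [← eval₂_at_apply, ← eval_map, minpoly_map_eq_prod hα, eval_prod]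
    simp only [eval_sub, eval_X, eval_C]
  rw [← Finset.prod_pow_eq_pow_sum, ht]
  simp_rw [← frobeniusAlgHom_pow_apply, map_mul, map_sub, map_neg, map_ofNat, AlgHom.commutes,
    frobeniusAlgHom_pow_apply, Finset.prod_mul_distrib, heval]
  simp [map_ofNat]

end FiniteField

theorem exists_eq_C_mul_X_sub_C_mul_X_sub_C_mul_X_sub_C {F : Type*} [Field F] [IsAlgClosed F]
    {P : F[X]} (hP : P.natDegree = 3) :
    ∃ u v w, P = C P.leadingCoeff * ((X - C u) * (X - C v) * (X - C w)) := by
  have hsplit := IsAlgClosed.splits P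
  obtain ⟨u, v, w, huvw⟩ := Multiset.card_eq_three.mp (hP ▸ hsplit.natDegree_eq_card_roots.symm)
  refine ⟨u, v, w, ?_⟩
  conv_lhs => rw [hsplit.eq_prod_roots, huvw]
  simp [mul_assoc]

theorem sq_discr_eq_of_derivative_eq {R : Type*} [CommRing R] [IsDomain R] {a u v w p q : R}
    (ha : a ≠ 0)
    (h : derivative (C a * ((X - C u) * (X - C v) * (X - C w))) =
      C (3 * a) * (X - C p) * (X - C q)) :
    ((u - v) * (u - w) * (v - w)) ^ 2 =
      -27 * ((p - u) * (p - v) * (p - w)) * ((q - u) * (q - v) * (q - w)) := by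
  have hroot (y : R) : a * ((y - u) * (y - v) + (y - u) * (y - w) + (y - v) * (y - w)) =
      a * (3 * (y - p) * (y - q)) := by
    have := congrArg (eval y) h
    simp only [derivative_mul, derivative_C, derivative_sub, derivative_X, eval_add, eval_mul,
      eval_sub, eval_C, eval_X, eval_zero, eval_one] at this
    linear_combination this
  have hu := mul_left_cancel₀ ha (hroot u)
  have hv := mul_left_cancel₀ ha (hroot v)
  have hw := mul_left_cancel₀ ha (hroot w)
  simp only [sub_self, mul_zero, zero_mul, add_zero, zero_add] at hu hv hw
  -- the product of `hu`, `hv`, `hw`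
  linear_combination (-(v - u) * (v - w) * (w - u) * (w - v)) * hu
    - 3 * (u - p) * (u - q) * (w - u) * (w - v) * hv
    - 9 * (u - p) * (u - q) * (v - p) * (v - q) * hw

theorem exists_fixed_and_swapped_of_map_ne {R : Type*} [CommRing R] (σ : R →+* R)
    (hσ : Function.Injective σ) {u v w : R}
    (hmaps : ∀ y ∈ ({u, v, w} : Set R), σ y ∈ ({u, v, w} : Set R))
    (hε : σ ((u - v) * (u - w) * (v - w)) ≠ (u - v) * (u - w) * (v - w)) :
    ∃ r ∈ ({u, v, w} : Set R), ∃ s ∈ ({u, v, w} : Set R), σ r = r ∧ σ s ≠ s ∧ σ (σ s) = s := by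
  have huv : u ≠ v := by rintro rfl; simp at hε
  have huw : u ≠ w := by rintro rfl; simp at hε
  have hvw : v ≠ w := by rintro rfl; simp at hε
  simp only [map_mul, map_sub] at hε
  have hu := hmaps u (by simp)
  have hv := hmaps v (by simp)
  have hw := hmaps w (by simp)
  simp only [Set.mem_insert_iff, Set.mem_singleton_iff] at hu hv hw
  -- Non-injective choices contradict `hσ`; the identity and the 3-cycles fix the product.
  rcases hu with hu | hu | hu <;> rcases hv with hv | hv | hv <;> rcases hw with hw | hw | hw <;>
    rw [hu, hv, hw] at hε <;>
    first
    | exact absurd (hσ (hu.trans hv.symm)) huv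
    | exact absurd (hσ (hu.trans hw.symm)) huw
    | exact absurd (hσ (hv.trans hw.symm)) hvw
    | exact ⟨u, by simp, v, by simp, hu, hv ▸ hvw.symm, by rw [hv, hw]⟩
    | exact ⟨v, by simp, u, by simp, hv, hu ▸ huw.symm, by rw [hu, hw]⟩
    | exact ⟨w, by simp, u, by simp, hw, hu ▸ huv.symm, by rw [hu, hv]⟩
    | exact absurd (by ring) hε

open FiniteField in
theorem exists_roots_fixed_and_swapped {K Ω : Type*} [Field K] [Fintype K] [Field Ω]
    [IsAlgClosed Ω] [Algebra K Ω] (h2 : (2 : K) ≠ 0) (h3 : (3 : K) ≠ 0) {f : K[X]} {γ₁ γ₂ : K}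
    (hf : f.natDegree = 3)
    (hcrit : derivative f = C (3 * f.leadingCoeff) * (X - C γ₁) * (X - C γ₂))
    {α : Ω} (hα : IsIntegral K α)
    (hns : ¬IsSquare ((-3) ^ (minpoly K α).natDegree * (minpoly K α).eval (f.eval γ₁) *
      (minpoly K α).eval (f.eval γ₂))) :
    ∃ r s : Ω, aeval r f = α ∧ aeval s f = α ∧
      r ^ Fintype.card K ^ (minpoly K α).natDegree = r ∧
      s ^ Fintype.card K ^ (minpoly K α).natDegree ≠ s ∧
      s ^ Fintype.card K ^ (2 * (minpoly K α).natDegree) = s := by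
  set ι := algebraMap K Ω
  set Φ := frobeniusAlgHom K Ω ^ (minpoly K α).natDegree
  have hΦ (y : Ω) : Φ y = y ^ Fintype.card K ^ (minpoly K α).natDegree :=
    frobeniusAlgHom_pow_apply _ y
  have hlc : ι f.leadingCoeff ≠ 0 := by
    simpa [ι] using leadingCoeff_ne_zero.mpr (ne_zero_of_natDegree_gt (hf ▸ three_pos))
  have hPdeg : (f.map ι - C α).natDegree = 3 := by rw [natDegree_sub_C, natDegree_map, hf]
  obtain ⟨u, v, w, hP⟩ := exists_eq_C_mul_X_sub_C_mul_X_sub_C_mul_X_sub_C hPdeg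
  have hPlc : (f.map ι - C α).leadingCoeff = ι f.leadingCoeff := by
    rw [leadingCoeff, hPdeg, coeff_sub, coeff_map, coeff_C, leadingCoeff, hf]; simp
  rw [hPlc] at hP
  have heval (y : Ω) : aeval y f - α = ι f.leadingCoeff * ((y - u) * (y - v) * (y - w)) := by
    rw [aeval_def, ← eval_map, ← eval_C (a := α) (x := y), ← eval_sub, hP]
    simp
  have hroots (y : Ω) : aeval y f = α ↔ y ∈ ({u, v, w} : Set Ω) := by
    rw [← sub_eq_zero, heval]
    simp [hlc, sub_eq_zero, or_assoc]
  have hder : derivative (f.map ι - C α) =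
      C (3 * ι f.leadingCoeff) * (X - C (ι γ₁)) * (X - C (ι γ₂)) := by
    rw [derivative_sub, derivative_C, sub_zero, derivative_map, hcrit]
    simp [map_ofNat]
  have hdisc := sq_discr_eq_of_derivative_eq hlc (hP ▸ hder)
  set ε := (u - v) * (u - w) * (v - w)
  have h3Ω : (3 : Ω) ≠ 0 := by rw [← map_ofNat ι 3]; exact (_root_.map_ne_zero ι).mpr h3
  have ht : (ι f.leadingCoeff * ε / 3) ^ 2 = -3 * (ι (f.eval γ₁) - α) * (ι (f.eval γ₂) - α) := by
    have h₁ := heval (ι γ₁)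
    have h₂ := heval (ι γ₂)
    rw [aeval_algebraMap_apply, coe_aeval_eq_eval] at h₁ h₂
    rw [h₁, h₂, div_pow, div_eq_iff (pow_ne_zero 2 h3Ω)]
    linear_combination (ι f.leadingCoeff) ^ 2 * hdisc
  have hmoved : Φ ε ≠ ε := by
    intro h
    apply pow_card_pow_natDegree_minpoly_ne_self h2 hα hns ht
    rw [← hΦ, map_div₀, map_mul, h, AlgHom.commutes, map_ofNat]
  have hfixα : Φ α = α := by rw [hΦ]; exact (pow_card_pow_eq_self_iff hα _).mpr dvd_rfl
  obtain ⟨r, hr, s, hs, hr_fix, hs_moved, hs_swap⟩ :=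
    exists_fixed_and_swapped_of_map_ne (Φ : Ω →+* Ω) (RingHom.injective _)
      (fun y hy ↦ (hroots _).mp <| by
        rw [RingHom.coe_coe, aeval_algHom_apply, (hroots y).mpr hy, hfixα])
      hmoved
  simp only [RingHom.coe_coe, hΦ] at hr_fix hs_moved hs_swap
  refine ⟨r, s, (hroots r).mpr hr, (hroots s).mpr hs, hr_fix, hs_moved, ?_⟩
  rwa [two_mul, pow_add, pow_mul]

theorem eq_C_leadingCoeff_mul_mul_of_dvd {K : Type*} [Field K] {P p₁ p₂ : K[X]}
    (h₁ : Irreducible p₁) (hm₁ : p₁.Monic) (hm₂ : p₂.Monic) (hd₁ : p₁ ∣ P) (hd₂ : p₂ ∣ P)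
    (hlt : p₂.natDegree < p₁.natDegree) (hdeg : P.natDegree ≤ p₁.natDegree + p₂.natDegree) :
    P = C P.leadingCoeff * (p₁ * p₂) := by
  have hcop : IsCoprime p₁ p₂ := h₁.coprime_iff_not_dvd.mpr fun h ↦
    hlt.not_ge (natDegree_le_of_dvd h hm₂.ne_zero)
  exact eq_leadingCoeff_mul_of_monic_of_dvd_of_natDegree_le (hm₁.mul hm₂) (hcop.mul_dvd hd₁ hd₂)
    (by rwa [hm₁.natDegree_mul hm₂])

open FiniteField in
theorem exists_irreducible_factors_comp_cubic {K : Type*} [Field K] [Fintype K]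
    (h2 : (2 : K) ≠ 0) (h3 : (3 : K) ≠ 0) {f G : K[X]} {γ₁ γ₂ : K} (hf : f.natDegree = 3)
    (hcrit : derivative f = C (3 * f.leadingCoeff) * (X - C γ₁) * (X - C γ₂))
    (hG : Irreducible G)
    (hns : ¬IsSquare ((-3) ^ G.natDegree * G.eval (f.eval γ₁) * G.eval (f.eval γ₂))) :
    ∃ h₁ h₂ : K[X], Irreducible h₁ ∧ Irreducible h₂ ∧ G.comp f = h₁ * h₂ ∧
      h₁.natDegree = G.natDegree ∧ h₂.natDegree = 2 * G.natDegree := by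
  obtain ⟨α, hα⟩ := IsAlgClosed.exists_aeval_eq_zero (AlgebraicClosure K) G
    (degree_pos_of_irreducible hG).ne'
  have hαint : IsIntegral K α := IsAlgebraic.isIntegral ⟨G, hG.ne_zero, hα⟩
  have hGlc : G.leadingCoeff ≠ 0 := leadingCoeff_ne_zero.mpr hG.ne_zero
  have hμ : minpoly K α = G * C G.leadingCoeff⁻¹ := (minpoly.eq_of_irreducible hG hα).symm
  have hm : (minpoly K α).natDegree = G.natDegree := by
    rw [hμ, natDegree_mul_C (inv_ne_zero hGlc)]
  have hnorm : (-3) ^ (minpoly K α).natDegree * (minpoly K α).eval (f.eval γ₁) *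
      (minpoly K α).eval (f.eval γ₂) =
      (-3) ^ G.natDegree * G.eval (f.eval γ₁) * G.eval (f.eval γ₂) * G.leadingCoeff⁻¹ ^ 2 := by
    rw [hm, hμ]
    simp only [eval_mul, eval_C]
    ring
  obtain ⟨r, s, hr_root, hs_root, hr_fix, hs_moved, hs_swap⟩ :=
    exists_roots_fixed_and_swapped h2 h3 hf hcrit hαint fun h ↦
      hns ((hnorm ▸ h).of_mul_sq (inv_ne_zero hGlc))
  rw [hm] at hr_fix hs_moved hs_swap
  have hcomp_deg : (G.comp f).natDegree = G.natDegree * 3 := by rw [natDegree_comp, hf]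
  have hcomp0 : G.comp f ≠ 0 := fun h ↦ by simp [h, hG.natDegree_pos.ne'] at hcomp_deg
  have hroot {y} (hy : aeval y f = α) : aeval y (G.comp f) = 0 := by rw [aeval_comp, hy, hα]
  have hr : IsIntegral K r := IsAlgebraic.isIntegral ⟨_, hcomp0, hroot hr_root⟩
  have hs : IsIntegral K s := IsAlgebraic.isIntegral ⟨_, hcomp0, hroot hs_root⟩
  have hr_deg : (minpoly K r).natDegree = G.natDegree :=
    Nat.dvd_antisymm ((pow_card_pow_eq_self_iff hr _).mp hr_fix)
      (hm ▸ natDegree_minpoly_dvd_of_aeval_eq hαint hr hr_root)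
  have hs_deg : (minpoly K s).natDegree = 2 * G.natDegree :=
    Nat.eq_two_mul_of_dvd_of_dvd_two_mul (hm ▸ natDegree_minpoly_dvd_of_aeval_eq hαint hs hs_root)
      ((pow_card_pow_eq_self_iff hs _).mp hs_swap)
      fun h ↦ hs_moved ((pow_card_pow_eq_self_iff hs _).mpr h)
  have hfactor := eq_C_leadingCoeff_mul_mul_of_dvd (minpoly.irreducible hs) (minpoly.monic hs)
    (minpoly.monic hr) (minpoly.dvd K s (hroot hs_root)) (minpoly.dvd K r (hroot hr_root))
    (by rw [hr_deg, hs_deg]; have := hG.natDegree_pos; omega)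
    (by rw [hr_deg, hs_deg, hcomp_deg]; omega)
  have hlc0 : (G.comp f).leadingCoeff ≠ 0 := leadingCoeff_ne_zero.mpr hcomp0
  refine ⟨C (G.comp f).leadingCoeff * minpoly K r, minpoly K s,
    (irreducible_isUnit_mul (isUnit_C.mpr hlc0.isUnit)).mpr (minpoly.irreducible hr),
    minpoly.irreducible hs, hfactor.trans (by ring), ?_, hs_deg⟩
  rw [natDegree_C_mul hlc0, hr_deg]

theorem natDegree_iterComp {K : Type*} [Field K] (f : K[X]) (k : ℕ) :
    (iterComp f k).natDegree = f.natDegree ^ k := by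
  induction k with
  | zero => simp [iterComp]
  | succ k ih => rw [iterComp, natDegree_comp, ih, pow_succ]

/-- if `g ∘ f^{n-1}` is irreducible and
`(-3)^{deg g} · g(fⁿ(γ₁)) · g(fⁿ(γ₂))` is not a square in the finite field `K`
(of characteristic `≠ 2, 3`), then `g ∘ fⁿ` factors into exactly two
irreducibles, of degrees `deg(g ∘ f^{n-1})` and `2·deg(g ∘ f^{n-1})`. -/
theorem stmt_4 {K : Type*} [Field K] [Fintype K]
    (h2 : (2 : K) ≠ 0) (h3 : (3 : K) ≠ 0)
    (a b c d γ₁ γ₂ : K) (ha : a ≠ 0)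
    (f : Polynomial K) (hf : f = C a * X ^ 3 + C b * X ^ 2 + C c * X + C d)
    (hcrit : f.derivative = C (3 * a) * (X - C γ₁) * (X - C γ₂))
    (g : Polynomial K) (n : ℕ) (hn : 1 ≤ n)
    (hirr : Irreducible (g.comp (iterComp f (n - 1))))
    (hns : ¬ IsSquare ((-3 : K) ^ g.natDegree *
      g.eval ((iterComp f n).eval γ₁) * g.eval ((iterComp f n).eval γ₂))) :
    ∃ h₁ h₂ : Polynomial K, Irreducible h₁ ∧ Irreducible h₂ ∧
      g.comp (iterComp f n) = h₁ * h₂ ∧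
      h₁.natDegree = (g.comp (iterComp f (n - 1))).natDegree ∧
      h₂.natDegree = 2 * (g.comp (iterComp f (n - 1))).natDegree := by
  obtain ⟨k, rfl⟩ : ∃ k, n = k + 1 := ⟨n - 1, by omega⟩
  rw [Nat.add_sub_cancel] at hirr ⊢
  have hf3 : f.natDegree = 3 := hf ▸ natDegree_cubic ha
  have hlc : f.leadingCoeff = a := hf ▸ leadingCoeff_cubic ha
  obtain ⟨j, hj⟩ : Odd (3 ^ k) := Odd.pow (by decide)
  have hdeg : (g.comp (iterComp f k)).natDegree = g.natDegree + 2 * (g.natDegree * j) := by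
    rw [natDegree_comp, natDegree_iterComp, hf3, hj]
    ring
  have hsq : (-3) ^ (g.comp (iterComp f k)).natDegree *
      (g.comp (iterComp f k)).eval (f.eval γ₁) * (g.comp (iterComp f k)).eval (f.eval γ₂) =
      (-3) ^ g.natDegree * g.eval ((iterComp f (k + 1)).eval γ₁) *
        g.eval ((iterComp f (k + 1)).eval γ₂) * ((-3) ^ (g.natDegree * j)) ^ 2 := by
    simp only [hdeg, iterComp, eval_comp]
    ring
  rw [iterComp, ← comp_assoc]
  exact exists_irreducible_factors_comp_cubic h2 h3 hf3 (hlc ▸ hcrit) hirr fun h ↦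
    hns ((hsq ▸ h).of_mul_sq (pow_ne_zero _ (neg_ne_zero.mpr h3)))
end

section
/- With |M_n| = 3^{(3^n-1)/2} · 2^{3^{n-1}} and |Aut(T_n)| = 6^{(3^n-1)/2}, the Hausdorff dimension lim_{n→∞} log|M_n| / log|Aut(T_n)| exists and equals 1 - 1/(3·log₂ 6). -/
/-- with `|M_n| = 3^{(3^n-1)/2}·2^{3^{n-1}}` and
`|Aut(T_n)| = 6^{(3^n-1)/2}`, the Hausdorff dimension
`lim log|M_n|/log|Aut(T_n)|` exists and equals `1 - 1/(3·log₂ 6)`. -/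
theorem stmt_9 :
    Filter.Tendsto
      (fun n : ℕ =>
        Real.log ((3 : ℝ) ^ ((3 ^ n - 1) / 2) * (2 : ℝ) ^ 3 ^ (n - 1)) /
          Real.log ((6 : ℝ) ^ ((3 ^ n - 1) / 2)))
      Filter.atTop (nhds (1 - 1 / (3 * Real.logb 2 6))) := by
  have hl2 : (0:ℝ) < Real.log 2 := Real.log_pos (by norm_num)
  have hl3 : (0:ℝ) < Real.log 3 := Real.log_pos (by norm_num)
  have hl6 : (0:ℝ) < Real.log 6 := Real.log_pos (by norm_num)
  set g : ℕ → ℝ := fun n =>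
    ((1 - (3:ℝ)⁻¹ ^ n) / 2 * Real.log 3 + 1/3 * Real.log 2) /
      ((1 - (3:ℝ)⁻¹ ^ n) / 2 * Real.log 6) with hg
  have key : Filter.Tendsto g Filter.atTop (nhds (1 - 1 / (3 * Real.logb 2 6))) := by
    have h0 : Filter.Tendsto (fun n : ℕ => (3:ℝ)⁻¹ ^ n) Filter.atTop (nhds 0) :=
      tendsto_pow_atTop_nhds_zero_of_lt_one (by norm_num) (by norm_num)
    have hnum : Filter.Tendsto (fun n : ℕ =>
        ((1 - (3:ℝ)⁻¹ ^ n) / 2 * Real.log 3 + 1/3 * Real.log 2)) Filter.atTop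
        (nhds ((1 - 0) / 2 * Real.log 3 + 1/3 * Real.log 2)) :=
      ((((tendsto_const_nhds.sub h0).div_const 2).mul tendsto_const_nhds).add tendsto_const_nhds)
    have hden : Filter.Tendsto (fun n : ℕ =>
        ((1 - (3:ℝ)⁻¹ ^ n) / 2 * Real.log 6)) Filter.atTop
        (nhds ((1 - 0) / 2 * Real.log 6)) :=
      (((tendsto_const_nhds.sub h0).div_const 2).mul tendsto_const_nhds)
    have hne : ((1:ℝ) - 0) / 2 * Real.log 6 ≠ 0 := by positivity
    have := hnum.div hden hne
    have hval : ((1 - 0) / 2 * Real.log 3 + 1/3 * Real.log 2) / ((1 - 0) / 2 * Real.log 6)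
        = 1 - 1 / (3 * Real.logb 2 6) := by
      have h6 : Real.log 6 = Real.log 2 + Real.log 3 := by
        rw [show (6:ℝ) = 2 * 3 by norm_num, Real.log_mul two_ne_zero (by norm_num)]
      have hs : Real.log 2 + Real.log 3 ≠ 0 := ne_of_gt (add_pos hl2 hl3)
      rw [Real.logb, h6]
      field_simp
      ring
    rwa [hval] at this
  refine Filter.Tendsto.congr' ?_ key
  filter_upwards [Filter.eventually_ge_atTop 1] with n hn
  obtain ⟨m, rfl⟩ := Nat.exists_eq_add_of_le hn
  simp only [hg]
  have hm : 1 + m = m + 1 := by ring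
  rw [hm]
  set a : ℕ := (3 ^ (m+1) - 1) / 2 with hadef
  have hdvd : 2 ∣ 3 ^ (m+1) - 1 := by
    have : Odd (3 ^ (m+1)) := Odd.pow (by decide)
    exact (Nat.Odd.sub_odd this odd_one).two_dvd
  have ha2 : a * 2 = 3 ^ (m+1) - 1 := Nat.div_mul_cancel hdvd
  have h1 : (1:ℕ) ≤ 3 ^ (m+1) := Nat.one_le_pow _ _ (by norm_num)
  have ha : (a:ℝ) = ((3:ℝ) ^ (m+1) - 1) / 2 := by
    have := congrArg (Nat.cast : ℕ → ℝ) ha2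
    push_cast [Nat.cast_sub h1] at this
    linarith
  have hP : ((3:ℝ) ^ (m+1)) ≠ 0 := by positivity
  have h3le : (3:ℝ) ≤ 3 ^ (m+1) := by
    calc (3:ℝ) = 3 ^ 1 := (pow_one 3).symm
    _ ≤ 3 ^ (m+1) := by
      apply pow_le_pow_right₀ (by norm_num)
      omega
  have hX : ((3:ℝ) ^ (m+1) - 1) / 2 ≠ 0 := by
    have : (0:ℝ) < ((3:ℝ) ^ (m+1) - 1) / 2 := by linarith
    exact ne_of_gt this
  have hinv : ((3:ℝ) ^ (m+1))⁻¹ < 1 := by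
    apply inv_lt_one_of_one_lt₀
    linarith
  simp only [Nat.add_sub_cancel]
  rw [Real.log_mul (by positivity) (by positivity), Real.log_pow, Real.log_pow, Real.log_pow]
  rw [ha, inv_pow]
  push_cast
  rw [div_eq_div_iff ?_ ?_ ]
  · field_simp
    ring
  · have : (0:ℝ) < (1 - ((3:ℝ) ^ (m+1))⁻¹) / 2 * Real.log 6 := by
      apply mul_pos _ hl6
      have : (0:ℝ) < ((3:ℝ) ^ (m+1))⁻¹ := by positivity
      linarith
    exact ne_of_gt this
  · exact mul_ne_zero hX (ne_of_gt hl6)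
end
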